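/- In the random-vector setting, let X = (X_1, …, X_M) have finite support 𝒳 with binary partition random variables (A_⟨α⟩, ⟨α⟩ ∈ Ω), and let X* and (B_⟨α⟩, ⟨α⟩ ∈ Ω) satisfy H(B_⟨α⟩, ⟨α⟩ ∈ Δ; X*_j, j ∈ τ) = H(A_⟨α⟩, ⟨α⟩ ∈ Δ; X_j, j ∈ τ) for every Δ ⊆ Ω and τ ⊆ {1,…,M}. Let σ : 𝒳 → 𝒳* be the resulting bijection onto the support 𝒳* of X* such that for each x ∈ 𝒳 the variable B_⟨{x}⟩ is the indicator random variable of σ(x) for X*. Then for any two distinct elements x = (x_1, …, x_M) and x' = (x'_1, …, x'_M) of 𝒳, writing y = σ(x) = (y_1, …, y_M) and y' = σ(x') = (y'_1, …, y'_M), one has x_m ≠ x'_m if and only if y_m ≠ y'_m, for every coordinate m ∈ {1, …, M}. -/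
import Mathlib


open scoped BigOperators

/-- Probability of an event under a pmf `μ` on a finite outcome space. -/
noncomputable def probOf {Ω : Type*} [Fintype Ω] (μ : Ω → ℝ) (E : Set Ω) : ℝ :=
  ∑ ω, E.indicator μ ω

/-- Shannon entropy (in bits) of the random variable `X` on the finite
probability space `(Ω, μ)`. -/
noncomputable def shEntropy {Ω : Type*} {S : Type*} [Fintype Ω] (μ : Ω → ℝ) (X : Ω → S) : ℝ :=
  ∑ ω, μ ω * (- Real.logb 2 (probOf μ {ω' | X ω' = X ω}))

/-- Conditional Shannon entropy `H(Y | X)` (in bits). -/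
noncomputable def shCondEntropy {Ω S T : Type*} [Fintype Ω] (μ : Ω → ℝ)
    (Y : Ω → T) (X : Ω → S) : ℝ :=
  shEntropy μ (fun ω => (X ω, Y ω)) - shEntropy μ X

/-- The support of the random variable `X` (values taken with positive probability). -/
noncomputable def rvSupport {Ω S : Type*} [Fintype Ω] (μ : Ω → ℝ) (X : Ω → S) : Finset S := by
  classical exact (Finset.univ.filter fun ω => 0 < μ ω).image X

/-- `μ` is a probability mass function. -/
def IsPMF {Ω : Type*} [Fintype Ω] (μ : Ω → ℝ) : Prop :=
  (∀ ω, 0 ≤ μ ω) ∧ ∑ ω, μ ω = 1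

/-- A polymatroid on the finite ground set `Z`. -/
def IsPolymatroid {Z : Type*} [DecidableEq Z] (h : Finset Z → ℝ) : Prop :=
  h ∅ = 0 ∧ (∀ A : Finset Z, 0 ≤ h A) ∧ (∀ A B : Finset Z, A ⊆ B → h A ≤ h B) ∧
    ∀ A B : Finset Z, h (A ∩ B) + h (A ∪ B) ≤ h A + h B

/-- The binary partition random variable `A_⟨α⟩` of a random variable `X` for
a part `α` of the unordered binary partition `⟨α⟩ = {α, 𝒳 \ α}` of the support
`𝒳` of `X`: it records whether `X ∈ α` or not. -/
noncomputable def bpVarOf {Ω S : Type*} [Fintype Ω] (μ : Ω → ℝ) (X : Ω → S)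
    (α : Finset S) : Ω → Finset S := by
  classical exact fun ω => if X ω ∈ α then α else rvSupport μ X \ α

/-- `α` is (the part of) a nonempty binary partition of the support of `X`:
`α` is a nonempty proper subset of the support. -/
def IsBinPart {Ω S : Type*} [Fintype Ω] (μ : Ω → ℝ) (X : Ω → S)
    (α : Finset S) : Prop := by
  classical exact α ⊆ rvSupport μ X ∧ α.Nonempty ∧ (rvSupport μ X \ α).Nonempty

set_option linter.unusedSectionVars false
set_option maxHeartbeats 1000000

section EntropyHelpers

variable {Ω : Type*} [Fintype Ω]

/-- `F` is finer than `G` on the positive-probability points. -/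
def Finer (μ : Ω → ℝ) {V W : Type*} (F : Ω → V) (G : Ω → W) : Prop :=
  ∀ ω ω', 0 < μ ω → 0 < μ ω' → F ω = F ω' → G ω = G ω'

lemma indicator_le_indicator_ker (μ : Ω → ℝ) (h0 : ∀ ω, 0 ≤ μ ω) {E F : Set Ω}
    (h : ∀ ω, 0 < μ ω → ω ∈ E → ω ∈ F) (ω : Ω) :
    E.indicator μ ω ≤ F.indicator μ ω := by
  rcases (h0 ω).lt_or_eq with hpos | hzero
  · by_cases hE : ω ∈ E
    · rw [Set.indicator_of_mem hE, Set.indicator_of_mem (h ω hpos hE)]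
    · rw [Set.indicator_of_notMem hE]
      exact Set.indicator_apply_nonneg fun _ => h0 ω
  · by_cases hE : ω ∈ E
    · rw [Set.indicator_of_mem hE, ← hzero]
      exact Set.indicator_apply_nonneg fun _ => h0 ω
    · rw [Set.indicator_of_notMem hE]
      exact Set.indicator_apply_nonneg fun _ => h0 ω

lemma probOf_le_probOf (μ : Ω → ℝ) (h0 : ∀ ω, 0 ≤ μ ω) {E F : Set Ω}
    (h : ∀ ω, 0 < μ ω → ω ∈ E → ω ∈ F) : probOf μ E ≤ probOf μ F :=
  Finset.sum_le_sum fun ω _ => indicator_le_indicator_ker μ h0 h ω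

lemma le_probOf (μ : Ω → ℝ) (h0 : ∀ ω, 0 ≤ μ ω) {E : Set Ω} {ω : Ω} (hω : ω ∈ E) :
    μ ω ≤ probOf μ E := by
  have := Finset.single_le_sum (f := E.indicator μ)
    (fun i _ => Set.indicator_apply_nonneg fun _ => h0 i) (Finset.mem_univ ω)
  rwa [Set.indicator_of_mem hω] at this

lemma probOf_add_le (μ : Ω → ℝ) (h0 : ∀ ω, 0 ≤ μ ω) {E F : Set Ω} {ω' : Ω}
    (h : ∀ ω, 0 < μ ω → ω ∈ E → ω ∈ F) (hF : ω' ∈ F) (hE : ω' ∉ E) :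
    probOf μ E + μ ω' ≤ probOf μ F := by
  classical
  unfold probOf
  rw [← Finset.sum_erase_add _ _ (Finset.mem_univ ω'),
      ← Finset.sum_erase_add (s := Finset.univ) (f := F.indicator μ) (Finset.mem_univ ω')]
  have h1 : ∑ ω ∈ Finset.univ.erase ω', E.indicator μ ω ≤
      ∑ ω ∈ Finset.univ.erase ω', F.indicator μ ω :=
    Finset.sum_le_sum fun ω _ => indicator_le_indicator_ker μ h0 h ω
  rw [Set.indicator_of_notMem hE, Set.indicator_of_mem hF]
  linarith

private lemma term_le (μ : Ω → ℝ) (h0 : ∀ ω, 0 ≤ μ ω) {V W : Type*} {F : Ω → V} {G : Ω → W}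
    (hFG : Finer μ F G) (ω : Ω) :
    μ ω * (- Real.logb 2 (probOf μ {ω' | G ω' = G ω})) ≤
      μ ω * (- Real.logb 2 (probOf μ {ω' | F ω' = F ω})) := by
  rcases (h0 ω).lt_or_eq with hpos | hzero
  · have hFfib : 0 < probOf μ {ω' | F ω' = F ω} :=
      lt_of_lt_of_le hpos (le_probOf μ h0 (by simp))
    have hsub : probOf μ {ω' | F ω' = F ω} ≤ probOf μ {ω' | G ω' = G ω} :=
      probOf_le_probOf μ h0 fun ω'' hp hm => hFG ω'' ω hp hpos hm
    have hlog := Real.logb_le_logb_of_le (one_lt_two) hFfib hsub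
    have := neg_le_neg hlog
    exact mul_le_mul_of_nonneg_left this (h0 ω)
  · rw [← hzero]; simp

lemma shEntropy_mono (μ : Ω → ℝ) (h0 : ∀ ω, 0 ≤ μ ω) {V W : Type*} {F : Ω → V} {G : Ω → W}
    (hFG : Finer μ F G) : shEntropy μ G ≤ shEntropy μ F :=
  Finset.sum_le_sum fun ω _ => term_le μ h0 hFG ω

lemma shEntropy_congr (μ : Ω → ℝ) (h0 : ∀ ω, 0 ≤ μ ω) {V W : Type*} {F : Ω → V} {G : Ω → W}
    (h1 : Finer μ F G) (h2 : Finer μ G F) : shEntropy μ F = shEntropy μ G :=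
  le_antisymm (shEntropy_mono μ h0 h2) (shEntropy_mono μ h0 h1)

lemma finer_of_entropy_le (μ : Ω → ℝ) (h0 : ∀ ω, 0 ≤ μ ω) {V W : Type*} {F : Ω → V} {G : Ω → W}
    (hFG : Finer μ F G) (hle : shEntropy μ F ≤ shEntropy μ G) : Finer μ G F := by
  intro ω ω' hω hω' hG
  by_contra hF
  have hFfib : 0 < probOf μ {a | F a = F ω} :=
    lt_of_lt_of_le hω (le_probOf μ h0 (by simp))
  have hkey : probOf μ {a | F a = F ω} + μ ω' ≤ probOf μ {a | G a = G ω} := by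
    refine probOf_add_le μ h0 (fun a ha hm => hFG a ω ha hω hm) ?_ ?_
    · exact hG.symm
    · intro hm; exact hF (hm.symm ▸ rfl)
  have hlt : probOf μ {a | F a = F ω} < probOf μ {a | G a = G ω} := by linarith
  have hloglt := Real.logb_lt_logb (one_lt_two) hFfib hlt
  have hterm : μ ω * (- Real.logb 2 (probOf μ {a | G a = G ω})) <
      μ ω * (- Real.logb 2 (probOf μ {a | F a = F ω})) :=
    mul_lt_mul_of_pos_left (by linarith) hω
  have : shEntropy μ G < shEntropy μ F :=
    Finset.sum_lt_sum (fun i _ => term_le μ h0 hFG i) ⟨ω, Finset.mem_univ ω, hterm⟩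
  linarith

lemma shEntropy_const (μ : Ω → ℝ) (h1 : ∑ ω, μ ω = 1) {V : Type*} (c : V) :
    shEntropy μ (fun _ => c) = 0 := by
  unfold shEntropy
  have hprob : probOf μ Set.univ = 1 := by
    unfold probOf; simp only [Set.indicator_univ]; exact h1
  refine Finset.sum_eq_zero fun ω _ => ?_
  have : {ω' : Ω | (fun _ : Ω => c) ω' = (fun _ : Ω => c) ω} = Set.univ := by
    ext a; simp
  rw [this, hprob]
  simp

lemma mem_rvSupport {S : Type*} {μ : Ω → ℝ} {X : Ω → S} {z : S} :
    z ∈ rvSupport μ X ↔ ∃ ω, 0 < μ ω ∧ X ω = z := by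
  classical
  unfold rvSupport
  simp [Finset.mem_image, Finset.mem_filter]

end EntropyHelpers

private lemma transfer_entropy
    {Ω Ω' : Type*} [Fintype Ω] [Fintype Ω'] {M : ℕ}
    {T : Fin M → Type*} {T' : Fin M → Type*}
    (μ : Ω → ℝ) (hμ0 : ∀ ω, 0 ≤ μ ω)
    (ν : Ω' → ℝ) (hν0 : ∀ ω, 0 ≤ ν ω)
    (X : (m : Fin M) → Ω → T m) (Xstar : (m : Fin M) → Ω' → T' m)
    {γ : Finset ((m : Fin M) → T m) → Type*}
    (B : (α : Finset ((m : Fin M) → T m)) → Ω' → γ α)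
    (Δ : Finset (Finset ((m : Fin M) → T m))) (τ : Finset (Fin M))
    (hBΔτ : shEntropy ν (fun ω =>
          ((fun a : {x // x ∈ Δ} => B a.1 ω), (fun j : {x // x ∈ τ} => Xstar j.1 ω))) =
        shEntropy μ (fun ω =>
          ((fun a : {x // x ∈ Δ} => bpVarOf μ (fun ω'' m => X m ω'') a.1 ω),
           (fun j : {x // x ∈ τ} => X j.1 ω))))
    {V W : Type*} (Fb : Ω' → V) (Fa : Ω → W)
    (hFb : ∀ ω ω', 0 < ν ω → 0 < ν ω' →
      (Fb ω = Fb ω' ↔ ((∀ β ∈ Δ, B β ω = B β ω') ∧ ∀ j ∈ τ, Xstar j ω = Xstar j ω')))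
    (hFa : ∀ ω ω', 0 < μ ω → 0 < μ ω' →
      (Fa ω = Fa ω' ↔ ((∀ β ∈ Δ, bpVarOf μ (fun ω'' m => X m ω'') β ω =
          bpVarOf μ (fun ω'' m => X m ω'') β ω') ∧ ∀ j ∈ τ, X j ω = X j ω'))) :
    shEntropy ν Fb = shEntropy μ Fa := by
  have hb1 : Finer ν Fb (fun ω =>
      ((fun a : {x // x ∈ Δ} => B a.1 ω), (fun j : {x // x ∈ τ} => Xstar j.1 ω))) := by
    intro ω ω' hω hω' h
    obtain ⟨h1, h2⟩ := (hFb ω ω' hω hω').1 h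
    exact congrArg₂ Prod.mk (funext fun a => h1 a.1 a.2) (funext fun j => h2 j.1 j.2)
  have hb2 : Finer ν (fun ω =>
      ((fun a : {x // x ∈ Δ} => B a.1 ω), (fun j : {x // x ∈ τ} => Xstar j.1 ω))) Fb := by
    intro ω ω' hω hω' h
    exact (hFb ω ω' hω hω').2 ⟨fun β hβ => congrFun (congrArg Prod.fst h) ⟨β, hβ⟩,
      fun j hj => congrFun (congrArg Prod.snd h) ⟨j, hj⟩⟩
  have ha1 : Finer μ Fa (fun ω =>
      ((fun a : {x // x ∈ Δ} => bpVarOf μ (fun ω'' m => X m ω'') a.1 ω),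
       (fun j : {x // x ∈ τ} => X j.1 ω))) := by
    intro ω ω' hω hω' h
    obtain ⟨h1, h2⟩ := (hFa ω ω' hω hω').1 h
    exact congrArg₂ Prod.mk (funext fun a => h1 a.1 a.2) (funext fun j => h2 j.1 j.2)
  have ha2 : Finer μ (fun ω =>
      ((fun a : {x // x ∈ Δ} => bpVarOf μ (fun ω'' m => X m ω'') a.1 ω),
       (fun j : {x // x ∈ τ} => X j.1 ω))) Fa := by
    intro ω ω' hω hω' h
    exact (hFa ω ω' hω hω').2 ⟨fun β hβ => congrFun (congrArg Prod.fst h) ⟨β, hβ⟩,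
      fun j hj => congrFun (congrArg Prod.snd h) ⟨j, hj⟩⟩
  calc shEntropy ν Fb
      = shEntropy ν (fun ω =>
          ((fun a : {x // x ∈ Δ} => B a.1 ω), (fun j : {x // x ∈ τ} => Xstar j.1 ω))) :=
        shEntropy_congr ν hν0 hb1 hb2
    _ = shEntropy μ (fun ω =>
          ((fun a : {x // x ∈ Δ} => bpVarOf μ (fun ω'' m => X m ω'') a.1 ω),
           (fun j : {x // x ∈ τ} => X j.1 ω))) := hBΔτ
    _ = shEntropy μ Fa := (shEntropy_congr μ hμ0 ha1 ha2).symm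

/-- Proposition 5: in the random-vector setting, let
`X = (X_1, …, X_M)` have support `𝒳` with binary partition random variables
`A_⟨α⟩`, let `X*` and `(B_⟨α⟩, ⟨α⟩ ∈ Ω)` satisfy the joint entropy equalities
`H(B_⟨α⟩, ⟨α⟩ ∈ Δ; X*_j, j ∈ τ) = H(A_⟨α⟩, ⟨α⟩ ∈ Δ; X_j, j ∈ τ)` for all
`Δ ⊆ Ω`, `τ ⊆ {1, …, M}`, and let `σ : 𝒳 → 𝒳*` be the resulting bijection
onto the support of `X*` such that each `B_⟨{x}⟩` is the indicator random
variable of `σ(x)` for `X*`.  Then for distinct `x, x' ∈ 𝒳`, writing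
`y = σ(x)`, `y' = σ(x')`, one has `x_m ≠ x'_m` iff `y_m ≠ y'_m`, for every
coordinate `m`. -/
theorem sigma_preserves_coordinate_disagreement
    {Ω Ω' : Type*} [Fintype Ω] [Fintype Ω'] {M : ℕ}
    {T T' : Fin M → Type*} [∀ m, DecidableEq (T m)]
    (μ : Ω → ℝ) (hμ0 : ∀ ω, 0 ≤ μ ω) (hμ1 : ∑ ω, μ ω = 1)
    (ν : Ω' → ℝ) (hν0 : ∀ ω, 0 ≤ ν ω) (hν1 : ∑ ω, ν ω = 1)
    (X : (m : Fin M) → Ω → T m) (Xstar : (m : Fin M) → Ω' → T' m)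
    {γ : Finset ((m : Fin M) → T m) → Type*}
    (B : (α : Finset ((m : Fin M) → T m)) → Ω' → γ α)
    (hB : ∀ Δ : Finset (Finset ((m : Fin M) → T m)),
      (∀ α ∈ Δ, IsBinPart μ (fun ω m => X m ω) α) →
      ∀ τ : Finset (Fin M),
      shEntropy ν (fun ω =>
          ((fun a : {x // x ∈ Δ} => B a.1 ω), (fun j : {x // x ∈ τ} => Xstar j.1 ω))) =
        shEntropy μ (fun ω =>
          ((fun a : {x // x ∈ Δ} => bpVarOf μ (fun ω' m => X m ω') a.1 ω),
           (fun j : {x // x ∈ τ} => X j.1 ω))))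
    (σ : ((m : Fin M) → T m) → ((m : Fin M) → T' m))
    (hσbij : Set.BijOn σ ↑(rvSupport μ (fun ω m => X m ω))
      ↑(rvSupport ν (fun ω m => Xstar m ω)))
    (hσind : ∀ x ∈ rvSupport μ (fun ω m => X m ω),
      ∃ v : γ {x}, ∀ ω, 0 < ν ω → (B {x} ω = v ↔ (fun m => Xstar m ω) = σ x)) :
    ∀ x x' : (m : Fin M) → T m,
      x ∈ rvSupport μ (fun ω m => X m ω) → x' ∈ rvSupport μ (fun ω m => X m ω) →
      x ≠ x' → ∀ m : Fin M, x m ≠ x' m ↔ σ x m ≠ σ x' m := by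
  classical
  intro x x' hx hx' hxx m
  set XX : Ω → ((m : Fin M) → T m) := fun ω m => X m ω with hXXdef
  set XS : Ω' → ((m : Fin M) → T' m) := fun ω m => Xstar m ω with hXSdef
  set S : Finset ((m : Fin M) → T m) := rvSupport μ XX with hSdef
  set SS : Finset ((m : Fin M) → T' m) := rvSupport ν XS with hSSdef
  -- basic support facts
  have hXmem : ∀ ω, 0 < μ ω → XX ω ∈ S := fun ω h => by
    rw [hSdef]; exact mem_rvSupport.2 ⟨ω, h, rfl⟩
  have hXSmem : ∀ ω, 0 < ν ω → XS ω ∈ SS := fun ω h => by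
    rw [hSSdef]; exact mem_rvSupport.2 ⟨ω, h, rfl⟩
  have hrepA : ∀ z ∈ S, ∃ ω, 0 < μ ω ∧ XX ω = z := fun z hz =>
    mem_rvSupport.1 (by rwa [hSdef] at hz)
  have hσmem : ∀ z ∈ S, σ z ∈ SS := fun z hz =>
    Finset.mem_coe.1 (hσbij.mapsTo (Finset.mem_coe.2 hz))
  have hσinj : ∀ z ∈ S, ∀ z' ∈ S, σ z = σ z' → z = z' := fun z hz z' hz' h =>
    hσbij.injOn (Finset.mem_coe.2 hz) (Finset.mem_coe.2 hz') h
  have hσsurj : ∀ w ∈ SS, ∃ z, z ∈ S ∧ σ z = w := by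
    intro w hw
    obtain ⟨z, hz, hzw⟩ := hσbij.surjOn (Finset.mem_coe.2 hw)
    exact ⟨z, Finset.mem_coe.1 hz, hzw⟩
  have hrepB : ∀ z ∈ S, ∃ ω, 0 < ν ω ∧ XS ω = σ z := fun z hz =>
    mem_rvSupport.1 (by rw [← hSSdef]; exact hσmem z hz)
  -- values of the binary partition variables
  have hAfun : ∀ (β : Finset ((m : Fin M) → T m)) (ω ω' : Ω), XX ω = XX ω' →
      bpVarOf μ XX β ω = bpVarOf μ XX β ω' := by
    intro β ω ω' h
    unfold bpVarOf
    rw [h]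
  have hAmem : ∀ (β : Finset ((m : Fin M) → T m)) (ω : Ω), XX ω ∈ β →
      bpVarOf μ XX β ω = β := by
    intro β ω h
    unfold bpVarOf
    rw [if_pos h]
  have hAnotEq : ∀ (β : Finset ((m : Fin M) → T m)) (ω ω' : Ω), XX ω ∉ β → XX ω' ∉ β →
      bpVarOf μ XX β ω = bpVarOf μ XX β ω' := by
    intro β ω ω' h h'
    unfold bpVarOf
    rw [if_neg h, if_neg h']
  have hAneMixed : ∀ (β : Finset ((m : Fin M) → T m)) (ω ω' : Ω), XX ω ∈ β → XX ω' ∉ β →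
      bpVarOf μ XX β ω ≠ bpVarOf μ XX β ω' := by
    intro β ω ω' h h' heq
    unfold bpVarOf at heq
    rw [if_pos h, if_neg h'] at heq
    have h2 := h
    rw [heq] at h2
    simp only [Finset.mem_sdiff] at h2
    exact h2.2 h
  have hBP : ∀ (α : Finset ((m : Fin M) → T m)), α ⊆ S → α.Nonempty →
      (∃ w, w ∈ S ∧ w ∉ α) → IsBinPart μ XX α := by
    intro α h1 h2 h3
    unfold IsBinPart
    obtain ⟨w, hwS, hwα⟩ := h3
    refine ⟨by rwa [hSdef] at h1, h2, ⟨w, ?_⟩⟩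
    simp only [Finset.mem_sdiff]
    exact ⟨by rwa [hSdef] at hwS, hwα⟩
  have hsingBP : ∀ z ∈ S, IsBinPart μ XX {z} := by
    intro z hz
    refine hBP {z} (Finset.singleton_subset_iff.2 hz) ⟨z, Finset.mem_singleton_self z⟩ ?_
    rcases eq_or_ne z x with rfl | hzx
    · exact ⟨x', hx', by simp [Finset.mem_singleton]; exact fun h => hxx h.symm⟩
    · exact ⟨x, hx, by simp [Finset.mem_singleton]; exact fun h => hzx h.symm⟩
  -- detection variables
  have hv : ∀ z ∈ S, ∃ v : γ {z}, ∀ ω, 0 < ν ω → (B {z} ω = v ↔ XS ω = σ z) := by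
    intro z hz
    obtain ⟨v, hv⟩ := hσind z hz
    exact ⟨v, fun ω h => hv ω h⟩
  -- global entropy identities
  have HXX : shEntropy ν XS = shEntropy μ XX := by
    refine transfer_entropy μ hμ0 ν hν0 X Xstar B ∅ Finset.univ
      (hB ∅ (fun α hα => absurd hα (Finset.notMem_empty α)) Finset.univ) XS XX ?_ ?_
    · intro ω ω' _ _
      constructor
      · intro h
        exact ⟨fun β hβ => absurd hβ (Finset.notMem_empty β), fun j _ => congrFun h j⟩
      · rintro ⟨-, h2⟩
        funext j
        exact h2 j (Finset.mem_univ j)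
    · intro ω ω' _ _
      constructor
      · intro h
        exact ⟨fun β hβ => absurd hβ (Finset.notMem_empty β), fun j _ => congrFun h j⟩
      · rintro ⟨-, h2⟩
        funext j
        exact h2 j (Finset.mem_univ j)
  have HXm : shEntropy ν (Xstar m) = shEntropy μ (X m) := by
    refine transfer_entropy μ hμ0 ν hν0 X Xstar B ∅ {m}
      (hB ∅ (fun α hα => absurd hα (Finset.notMem_empty α)) {m}) (Xstar m) (X m) ?_ ?_
    · intro ω ω' _ _
      constructor
      · intro h
        refine ⟨fun β hβ => absurd hβ (Finset.notMem_empty β), fun j hj => ?_⟩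
        rw [Finset.mem_singleton] at hj
        subst hj
        exact h
      · rintro ⟨-, h2⟩
        exact h2 m (Finset.mem_singleton_self m)
    · intro ω ω' _ _
      constructor
      · intro h
        refine ⟨fun β hβ => absurd hβ (Finset.notMem_empty β), fun j hj => ?_⟩
        rw [Finset.mem_singleton] at hj
        subst hj
        exact h
      · rintro ⟨-, h2⟩
        exact h2 m (Finset.mem_singleton_self m)
  -- Step 0 : every B β is a.s. a function of XS
  have step0 : ∀ (β : Finset ((m : Fin M) → T m)), IsBinPart μ XX β →
      ∀ ω₁ ω₂, 0 < ν ω₁ → 0 < ν ω₂ → XS ω₁ = XS ω₂ → B β ω₁ = B β ω₂ := by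
    intro β hβ ω₁ ω₂ h1 h2 hXSeq
    have he : shEntropy ν (fun ω => (B β ω, XS ω)) = shEntropy μ XX := by
      refine transfer_entropy μ hμ0 ν hν0 X Xstar B {β} Finset.univ
        (hB {β} (fun α hα => by rw [Finset.mem_singleton] at hα; rwa [hα]) Finset.univ)
        _ XX ?_ ?_
      · intro ω ω' _ _
        constructor
        · intro h
          refine ⟨fun β' hβ' => ?_, fun j _ => congrFun (congrArg Prod.snd h) j⟩
          rw [Finset.mem_singleton] at hβ'
          subst hβ'
          exact congrArg Prod.fst h
        · rintro ⟨hh1, hh2⟩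
          exact congrArg₂ Prod.mk (hh1 β (Finset.mem_singleton_self β))
            (funext fun j => hh2 j (Finset.mem_univ j))
      · intro ω ω' _ _
        constructor
        · intro h
          exact ⟨fun β' _ => hAfun β' ω ω' h, fun j _ => congrFun h j⟩
        · rintro ⟨-, hh2⟩
          funext j
          exact hh2 j (Finset.mem_univ j)
    have hf1 : Finer ν (fun ω => (B β ω, XS ω)) XS := fun ω ω' _ _ h => congrArg Prod.snd h
    have hle : shEntropy ν (fun ω => (B β ω, XS ω)) ≤ shEntropy ν XS :=
      le_of_eq (he.trans HXX.symm)
    have hfin := finer_of_entropy_le ν hν0 hf1 hle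
    exact congrArg Prod.fst (hfin ω₁ ω₂ h1 h2 hXSeq)
  -- Step 1 : singleton indicators are binary across the support
  have step1 : ∀ z0 ∈ S, ∀ z1 ∈ S, ∀ z2 ∈ S, z0 ≠ z1 → z2 ≠ z0 → z2 ≠ z1 →
      ∀ ω₁ ω₂, 0 < ν ω₁ → 0 < ν ω₂ → XS ω₁ = σ z0 → XS ω₂ = σ z1 →
      B {z2} ω₁ = B {z2} ω₂ := by
    intro z0 hz0 z1 hz1 z2 hz2 hne01 hne20 hne21 ω₁ ω₂ hq1 hq2 hv1 hv2
    by_contra hneB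
    set Δ' : Finset ((m : Fin M) → T m) := S \ {z0, z1} with hΔ'def
    have hΔ'S : ∀ z ∈ Δ', z ∈ S ∧ z ≠ z0 ∧ z ≠ z1 := by
      intro z hz
      rw [hΔ'def] at hz
      simp only [Finset.mem_sdiff, Finset.mem_insert, Finset.mem_singleton] at hz
      exact ⟨hz.1, fun h => hz.2 (Or.inl h), fun h => hz.2 (Or.inr h)⟩
    have hz2Δ' : z2 ∈ Δ' := by
      rw [hΔ'def]
      simp only [Finset.mem_sdiff, Finset.mem_insert, Finset.mem_singleton]
      exact ⟨hz2, fun h => h.elim hne20 hne21⟩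
    have hEB' : shEntropy ν (fun ω => fun z : {w // w ∈ Δ'} => B {z.1} ω) =
        shEntropy μ (fun ω => fun z : {w // w ∈ Δ'} => bpVarOf μ XX {z.1} ω) := by
      refine transfer_entropy μ hμ0 ν hν0 X Xstar B (Δ'.image fun z => ({z} : Finset _)) ∅
        (hB _ ?_ ∅) _ _ ?_ ?_
      · intro β hβ
        obtain ⟨z, hz, rfl⟩ := Finset.mem_image.1 hβ
        exact hsingBP z (hΔ'S z hz).1
      · intro ω ω' _ _
        constructor
        · intro h
          refine ⟨fun β hβ => ?_, fun j hj => absurd hj (Finset.notMem_empty j)⟩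
          obtain ⟨z, hz, rfl⟩ := Finset.mem_image.1 hβ
          exact congrFun h ⟨z, hz⟩
        · rintro ⟨h1, -⟩
          funext z
          exact h1 {z.1} (Finset.mem_image_of_mem _ z.2)
      · intro ω ω' _ _
        constructor
        · intro h
          refine ⟨fun β hβ => ?_, fun j hj => absurd hj (Finset.notMem_empty j)⟩
          obtain ⟨z, hz, rfl⟩ := Finset.mem_image.1 hβ
          exact congrFun h ⟨z, hz⟩
        · rintro ⟨h1, -⟩
          funext z
          exact h1 {z.1} (Finset.mem_image_of_mem _ z.2)
    have hEBfull : shEntropy ν (fun ω => fun z : {w // w ∈ S} => B {z.1} ω) =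
        shEntropy μ (fun ω => fun z : {w // w ∈ S} => bpVarOf μ XX {z.1} ω) := by
      refine transfer_entropy μ hμ0 ν hν0 X Xstar B (S.image fun z => ({z} : Finset _)) ∅
        (hB _ ?_ ∅) _ _ ?_ ?_
      · intro β hβ
        obtain ⟨z, hz, rfl⟩ := Finset.mem_image.1 hβ
        exact hsingBP z hz
      · intro ω ω' _ _
        constructor
        · intro h
          refine ⟨fun β hβ => ?_, fun j hj => absurd hj (Finset.notMem_empty j)⟩
          obtain ⟨z, hz, rfl⟩ := Finset.mem_image.1 hβ
          exact congrFun h ⟨z, hz⟩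
        · rintro ⟨h1, -⟩
          funext z
          exact h1 {z.1} (Finset.mem_image_of_mem _ z.2)
      · intro ω ω' _ _
        constructor
        · intro h
          refine ⟨fun β hβ => ?_, fun j hj => absurd hj (Finset.notMem_empty j)⟩
          obtain ⟨z, hz, rfl⟩ := Finset.mem_image.1 hβ
          exact congrFun h ⟨z, hz⟩
        · rintro ⟨h1, -⟩
          funext z
          exact h1 {z.1} (Finset.mem_image_of_mem _ z.2)
    have hbad : ∀ ωa ωb, 0 < ν ωa → 0 < ν ωb → σ z0 = XS ωa → σ z1 = XS ωb →
        (∀ z ∈ Δ', B {z} ωa = B {z} ωb) → False := by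
      intro ωa ωb hqa hqb hwa hwb hcomp
      have e1 : B {z2} ωa = B {z2} ω₁ :=
        step0 {z2} (hsingBP z2 hz2) ωa ω₁ hqa hq1 (hwa.symm.trans hv1.symm)
      have e2 : B {z2} ωb = B {z2} ω₂ :=
        step0 {z2} (hsingBP z2 hz2) ωb ω₂ hqb hq2 (hwb.symm.trans hv2.symm)
      exact hneB (e1.symm.trans ((hcomp z2 hz2Δ').trans e2))
    have hdet : ∀ ωa ωb, 0 < ν ωa → 0 < ν ωb → ∀ u, u ∈ S → u ≠ z0 → u ≠ z1 →
        σ u = XS ωa → (∀ z ∈ Δ', B {z} ωa = B {z} ωb) → XS ωb = XS ωa := by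
      intro ωa ωb hqa hqb u huS hu0 hu1 hu hcomp
      have huΔ' : u ∈ Δ' := by
        rw [hΔ'def]
        simp only [Finset.mem_sdiff, Finset.mem_insert, Finset.mem_singleton]
        exact ⟨huS, fun h => h.elim hu0 hu1⟩
      obtain ⟨v, hvw⟩ := hv u huS
      have hbv : B {u} ωa = v := (hvw ωa hqa).2 hu.symm
      have hbv' : B {u} ωb = v := by rw [← hcomp u huΔ']; exact hbv
      have : XS ωb = σ u := (hvw ωb hqb).1 hbv'
      exact this.trans hu
    have hFf : Finer ν (fun ω => fun z : {w // w ∈ Δ'} => B {z.1} ω)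
        (fun ω => fun z : {w // w ∈ S} => B {z.1} ω) := by
      intro ω ω' hq hq' h
      have hcomp : ∀ z ∈ Δ', B {z} ω = B {z} ω' := fun z hz => congrFun h ⟨z, hz⟩
      suffices hXSeq : XS ω = XS ω' by
        funext z
        exact step0 {z.1} (hsingBP z.1 z.2) ω ω' hq hq' hXSeq
      obtain ⟨w, hwS, hw⟩ := hσsurj (XS ω) (hXSmem ω hq)
      obtain ⟨w', hw'S, hw'⟩ := hσsurj (XS ω') (hXSmem ω' hq')
      by_cases hw0 : w ≠ z0 ∧ w ≠ z1
      · exact (hdet ω ω' hq hq' w hwS hw0.1 hw0.2 hw hcomp).symm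
      · by_cases hw'0 : w' ≠ z0 ∧ w' ≠ z1
        · exact hdet ω' ω hq' hq w' hw'S hw'0.1 hw'0.2 hw' fun z hz => (hcomp z hz).symm
        · have hw01 : w = z0 ∨ w = z1 := by
            by_contra hcon
            push_neg at hcon
            exact hw0 hcon
          have hw'01 : w' = z0 ∨ w' = z1 := by
            by_contra hcon
            push_neg at hcon
            exact hw'0 hcon
          rcases hw01 with rfl | rfl <;> rcases hw'01 with h | h
          · subst h
            rw [← hw, ← hw']
          · subst h
            exact absurd (hbad ω ω' hq hq' hw hw' hcomp) id
          · subst h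
            exact absurd (hbad ω' ω hq' hq hw' hw fun z hz => (hcomp z hz).symm) id
          · subst h
            rw [← hw, ← hw']
    have hFr : Finer ν (fun ω => fun z : {w // w ∈ S} => B {z.1} ω)
        (fun ω => fun z : {w // w ∈ Δ'} => B {z.1} ω) := by
      intro ω ω' _ _ h
      funext z
      exact congrFun h ⟨z.1, (hΔ'S z.1 z.2).1⟩
    have hEq : shEntropy μ (fun ω => fun z : {w // w ∈ S} => bpVarOf μ XX {z.1} ω) =
        shEntropy μ (fun ω => fun z : {w // w ∈ Δ'} => bpVarOf μ XX {z.1} ω) := by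
      rw [← hEBfull, ← hEB']
      exact (shEntropy_congr ν hν0 hFf hFr).symm
    have hGf : Finer μ (fun ω => fun z : {w // w ∈ S} => bpVarOf μ XX {z.1} ω)
        (fun ω => fun z : {w // w ∈ Δ'} => bpVarOf μ XX {z.1} ω) := by
      intro ω ω' _ _ h
      funext z
      exact congrFun h ⟨z.1, (hΔ'S z.1 z.2).1⟩
    have hfin := finer_of_entropy_le μ hμ0 hGf hEq.le
    obtain ⟨ωa, hpa, hXa⟩ := hrepA z0 hz0
    obtain ⟨ωb, hpb, hXb⟩ := hrepA z1 hz1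
    have hA'eq : (fun z : {w // w ∈ Δ'} => bpVarOf μ XX {z.1} ωa) =
        (fun z : {w // w ∈ Δ'} => bpVarOf μ XX {z.1} ωb) := by
      funext z
      obtain ⟨hzS', hzz0, hzz1⟩ := hΔ'S z.1 z.2
      refine hAnotEq {z.1} ωa ωb ?_ ?_
      · rw [hXa]
        simp only [Finset.mem_singleton]
        exact fun h => hzz0 h.symm
      · rw [hXb]
        simp only [Finset.mem_singleton]
        exact fun h => hzz1 h.symm
    have hfull := hfin ωa ωb hpa hpb hA'eq
    have hcomp0 := congrFun hfull ⟨z0, hz0⟩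
    refine hAneMixed {z0} ωa ωb ?_ ?_ hcomp0
    · rw [hXa]
      exact Finset.mem_singleton_self z0
    · rw [hXb]
      simp only [Finset.mem_singleton]
      exact fun h => hne01 h.symm
  have step1' : ∀ z ∈ S, ∀ ω₁ ω₂, 0 < ν ω₁ → 0 < ν ω₂ →
      XS ω₁ ≠ σ z → XS ω₂ ≠ σ z → B {z} ω₁ = B {z} ω₂ := by
    intro z hz ω₁ ω₂ h1 h2 hn1 hn2
    obtain ⟨w, hwS, hw⟩ := hσsurj (XS ω₁) (hXSmem ω₁ h1)
    obtain ⟨w', hw'S, hw'⟩ := hσsurj (XS ω₂) (hXSmem ω₂ h2)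
    rcases eq_or_ne w w' with rfl | hww
    · exact step0 {z} (hsingBP z hz) ω₁ ω₂ h1 h2 (hw.symm.trans hw')
    · refine step1 w hwS w' hw'S z hz hww ?_ ?_ ω₁ ω₂ h1 h2 hw.symm hw'.symm
      · intro h
        exact hn1 (by rw [← h] at hw; exact hw.symm)
      · intro h
        exact hn2 (by rw [← h] at hw'; exact hw'.symm)
  -- Step 2 core
  have step2core : ∀ (α : Finset ((m : Fin M) → T m)), IsBinPart μ XX α →
      ∀ (C : Finset ((m : Fin M) → T m)), C ⊆ S →
      (∀ ω ω', 0 < μ ω → 0 < μ ω' →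
        (∀ z ∈ C, bpVarOf μ XX {z} ω = bpVarOf μ XX {z} ω') →
        bpVarOf μ XX α ω = bpVarOf μ XX α ω') →
      ∀ ω₁ ω₂, 0 < ν ω₁ → 0 < ν ω₂ → (∀ z ∈ C, B {z} ω₁ = B {z} ω₂) →
      B α ω₁ = B α ω₂ := by
    intro α hα C hCS hker ω₁ ω₂ hq1 hq2 hcomp
    have hE1 : shEntropy ν (fun ω => (B α ω, fun z : {w // w ∈ C} => B {z.1} ω)) =
        shEntropy μ (fun ω =>
          (bpVarOf μ XX α ω, fun z : {w // w ∈ C} => bpVarOf μ XX {z.1} ω)) := by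
      refine transfer_entropy μ hμ0 ν hν0 X Xstar B
        (insert α (C.image fun z => ({z} : Finset _))) ∅ (hB _ ?_ ∅) _ _ ?_ ?_
      · intro β hβ
        rcases Finset.mem_insert.1 hβ with rfl | hβ'
        · exact hα
        · obtain ⟨z, hz, rfl⟩ := Finset.mem_image.1 hβ'
          exact hsingBP z (hCS hz)
      · intro ω ω' _ _
        constructor
        · intro h
          refine ⟨fun β hβ => ?_, fun j hj => absurd hj (Finset.notMem_empty j)⟩
          rcases Finset.mem_insert.1 hβ with rfl | hβ'
          · exact congrArg Prod.fst h
          · obtain ⟨z, hz, rfl⟩ := Finset.mem_image.1 hβ'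
            exact congrFun (congrArg Prod.snd h) ⟨z, hz⟩
        · rintro ⟨h1, -⟩
          exact congrArg₂ Prod.mk (h1 α (Finset.mem_insert_self _ _))
            (funext fun z =>
              h1 {z.1} (Finset.mem_insert_of_mem (Finset.mem_image_of_mem _ z.2)))
      · intro ω ω' _ _
        constructor
        · intro h
          refine ⟨fun β hβ => ?_, fun j hj => absurd hj (Finset.notMem_empty j)⟩
          rcases Finset.mem_insert.1 hβ with rfl | hβ'
          · exact congrArg Prod.fst h
          · obtain ⟨z, hz, rfl⟩ := Finset.mem_image.1 hβ'
            exact congrFun (congrArg Prod.snd h) ⟨z, hz⟩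
        · rintro ⟨h1, -⟩
          exact congrArg₂ Prod.mk (h1 α (Finset.mem_insert_self _ _))
            (funext fun z =>
              h1 {z.1} (Finset.mem_insert_of_mem (Finset.mem_image_of_mem _ z.2)))
    have hE0 : shEntropy ν (fun ω => fun z : {w // w ∈ C} => B {z.1} ω) =
        shEntropy μ (fun ω => fun z : {w // w ∈ C} => bpVarOf μ XX {z.1} ω) := by
      refine transfer_entropy μ hμ0 ν hν0 X Xstar B (C.image fun z => ({z} : Finset _)) ∅
        (hB _ ?_ ∅) _ _ ?_ ?_
      · intro β hβ
        obtain ⟨z, hz, rfl⟩ := Finset.mem_image.1 hβ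
        exact hsingBP z (hCS hz)
      · intro ω ω' _ _
        constructor
        · intro h
          refine ⟨fun β hβ => ?_, fun j hj => absurd hj (Finset.notMem_empty j)⟩
          obtain ⟨z, hz, rfl⟩ := Finset.mem_image.1 hβ
          exact congrFun h ⟨z, hz⟩
        · rintro ⟨h1, -⟩
          funext z
          exact h1 {z.1} (Finset.mem_image_of_mem _ z.2)
      · intro ω ω' _ _
        constructor
        · intro h
          refine ⟨fun β hβ => ?_, fun j hj => absurd hj (Finset.notMem_empty j)⟩
          obtain ⟨z, hz, rfl⟩ := Finset.mem_image.1 hβ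
          exact congrFun h ⟨z, hz⟩
        · rintro ⟨h1, -⟩
          funext z
          exact h1 {z.1} (Finset.mem_image_of_mem _ z.2)
    have hAeq : shEntropy μ (fun ω =>
          (bpVarOf μ XX α ω, fun z : {w // w ∈ C} => bpVarOf μ XX {z.1} ω)) =
        shEntropy μ (fun ω => fun z : {w // w ∈ C} => bpVarOf μ XX {z.1} ω) :=
      shEntropy_congr μ hμ0 (fun ω ω' _ _ h => congrArg Prod.snd h)
        (fun ω ω' hp hp' h => congrArg₂ Prod.mk
          (hker ω ω' hp hp' fun z hz => congrFun h ⟨z, hz⟩) h)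
    have hle : shEntropy ν (fun ω => (B α ω, fun z : {w // w ∈ C} => B {z.1} ω)) ≤
        shEntropy ν (fun ω => fun z : {w // w ∈ C} => B {z.1} ω) := by
      rw [hE1, hAeq, ← hE0]
    have hfin := finer_of_entropy_le ν hν0
      (fun ω ω' _ _ h => congrArg Prod.snd h :
        Finer ν (fun ω => (B α ω, fun z : {w // w ∈ C} => B {z.1} ω))
          (fun ω => fun z : {w // w ∈ C} => B {z.1} ω)) hle
    have := hfin ω₁ ω₂ hq1 hq2 (funext fun z => hcomp z.1 z.2)
    exact congrArg Prod.fst this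
  have step2a_in : ∀ (α : Finset ((m : Fin M) → T m)), IsBinPart μ XX α → α ⊆ S →
      ∀ w₁ ∈ S, ∀ w₂ ∈ S, w₁ ∈ α → w₂ ∈ α →
      ∀ ω₁ ω₂, 0 < ν ω₁ → 0 < ν ω₂ → XS ω₁ = σ w₁ → XS ω₂ = σ w₂ →
      B α ω₁ = B α ω₂ := by
    intro α hα hαS w₁ hw₁ w₂ hw₂ hw₁α hw₂α ω₁ ω₂ hq1 hq2 hXS1 hXS2
    refine step2core α hα (S \ α) Finset.sdiff_subset ?_ ω₁ ω₂ hq1 hq2 ?_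
    · intro ω ω' hp hp' hc
      by_cases h1 : XX ω ∈ α <;> by_cases h2 : XX ω' ∈ α
      · rw [hAmem α ω h1, hAmem α ω' h2]
      · exfalso
        have hz : XX ω' ∈ S \ α := by
          simp only [Finset.mem_sdiff]
          exact ⟨hXmem ω' hp', h2⟩
        refine hAneMixed {XX ω'} ω' ω (Finset.mem_singleton_self _) ?_ (hc (XX ω') hz).symm
        simp only [Finset.mem_singleton]
        exact fun h => h2 (h ▸ h1)
      · exfalso
        have hz : XX ω ∈ S \ α := by
          simp only [Finset.mem_sdiff]
          exact ⟨hXmem ω hp, h1⟩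
        refine hAneMixed {XX ω} ω ω' (Finset.mem_singleton_self _) ?_ (hc (XX ω) hz)
        simp only [Finset.mem_singleton]
        exact fun h => h1 (h ▸ h2)
      · exact hAnotEq α ω ω' h1 h2
    · intro z hz
      simp only [Finset.mem_sdiff] at hz
      refine step1' z hz.1 ω₁ ω₂ hq1 hq2 ?_ ?_
      · rw [hXS1]
        intro h
        exact hz.2 (hσinj w₁ hw₁ z hz.1 h ▸ hw₁α)
      · rw [hXS2]
        intro h
        exact hz.2 (hσinj w₂ hw₂ z hz.1 h ▸ hw₂α)
  have step2a_out : ∀ (α : Finset ((m : Fin M) → T m)), IsBinPart μ XX α → α ⊆ S →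
      ∀ w₁ ∈ S, ∀ w₂ ∈ S, w₁ ∉ α → w₂ ∉ α →
      ∀ ω₁ ω₂, 0 < ν ω₁ → 0 < ν ω₂ → XS ω₁ = σ w₁ → XS ω₂ = σ w₂ →
      B α ω₁ = B α ω₂ := by
    intro α hα hαS w₁ hw₁ w₂ hw₂ hw₁α hw₂α ω₁ ω₂ hq1 hq2 hXS1 hXS2
    refine step2core α hα α hαS ?_ ω₁ ω₂ hq1 hq2 ?_
    · intro ω ω' hp hp' hc
      by_cases h1 : XX ω ∈ α <;> by_cases h2 : XX ω' ∈ α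
      · -- both in α : show the underlying values agree
        have hXeq : XX ω = XX ω' := by
          by_contra hne'
          refine hAneMixed {XX ω} ω ω' (Finset.mem_singleton_self _) ?_ (hc (XX ω) h1)
          simp only [Finset.mem_singleton]
          exact fun h => hne' h.symm
        exact hAfun α ω ω' hXeq
      · exfalso
        refine hAneMixed {XX ω} ω ω' (Finset.mem_singleton_self _) ?_ (hc (XX ω) h1)
        simp only [Finset.mem_singleton]
        exact fun h => h2 (h ▸ h1)
      · exfalso
        refine hAneMixed {XX ω'} ω' ω (Finset.mem_singleton_self _) ?_ (hc (XX ω') h2).symm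
        simp only [Finset.mem_singleton]
        exact fun h => h1 (h ▸ h2)
      · exact hAnotEq α ω ω' h1 h2
    · intro z hz
      refine step1' z (hαS hz) ω₁ ω₂ hq1 hq2 ?_ ?_
      · rw [hXS1]
        intro h
        exact hw₁α (hσinj w₁ hw₁ z (hαS hz) h ▸ hz)
      · rw [hXS2]
        intro h
        exact hw₂α (hσinj w₂ hw₂ z (hαS hz) h ▸ hz)
  have step2b : ∀ (α : Finset ((m : Fin M) → T m)), IsBinPart μ XX α → α ⊆ S →
      ∀ w₁ ∈ S, ∀ w₂ ∈ S, w₁ ∈ α → w₂ ∉ α →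
      ∀ ω₁ ω₂, 0 < ν ω₁ → 0 < ν ω₂ → XS ω₁ = σ w₁ → XS ω₂ = σ w₂ →
      B α ω₁ ≠ B α ω₂ := by
    intro α hα hαS w₁ hw₁ w₂ hw₂ hw₁α hw₂α ω₁ ω₂ hq1 hq2 hXS1 hXS2 heq
    have hconst : ∀ ω, 0 < ν ω → B α ω = B α ω₁ := by
      intro ω hq
      obtain ⟨w, hwS, hw⟩ := hσsurj (XS ω) (hXSmem ω hq)
      by_cases hwα : w ∈ α
      · exact step2a_in α hα hαS w hwS w₁ hw₁ hwα hw₁α ω ω₁ hq hq1 hw.symm hXS1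
      · have h2 : B α ω = B α ω₂ :=
          step2a_out α hα hαS w hwS w₂ hw₂ hwα hw₂α ω ω₂ hq hq2 hw.symm hXS2
        rw [h2, ← heq]
    have hBent : shEntropy ν (B α) = 0 := by
      have hc := shEntropy_congr ν hν0 (F := B α) (G := fun _ : Ω' => (0 : ℕ))
        (fun ω ω' _ _ _ => rfl)
        (fun ω ω' hq hq' _ => (hconst ω hq).trans (hconst ω' hq').symm)
      rw [hc, shEntropy_const ν hν1]
    have hAent : shEntropy μ (bpVarOf μ XX α) = shEntropy ν (B α) := by
      refine (transfer_entropy μ hμ0 ν hν0 X Xstar B {α} ∅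
        (hB {α} (fun β hβ => by rw [Finset.mem_singleton] at hβ; rwa [hβ]) ∅)
        (B α) (bpVarOf μ XX α) ?_ ?_).symm
      · intro ω ω' _ _
        constructor
        · intro h
          refine ⟨fun β hβ => ?_, fun j hj => absurd hj (Finset.notMem_empty j)⟩
          rw [Finset.mem_singleton] at hβ
          subst hβ
          exact h
        · rintro ⟨h1, -⟩
          exact h1 α (Finset.mem_singleton_self α)
      · intro ω ω' _ _
        constructor
        · intro h
          refine ⟨fun β hβ => ?_, fun j hj => absurd hj (Finset.notMem_empty j)⟩
          rw [Finset.mem_singleton] at hβ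
          subst hβ
          exact h
        · rintro ⟨h1, -⟩
          exact h1 α (Finset.mem_singleton_self α)
    have hle : shEntropy μ (bpVarOf μ XX α) ≤ shEntropy μ (fun _ : Ω => (0 : ℕ)) := by
      rw [hAent, hBent, shEntropy_const μ hμ1]
    have hfin := finer_of_entropy_le μ hμ0
      (fun ω ω' _ _ _ => rfl : Finer μ (bpVarOf μ XX α) (fun _ : Ω => (0 : ℕ))) hle
    obtain ⟨ωa, hpa, hXa⟩ := hrepA w₁ hw₁
    obtain ⟨ωb, hpb, hXb⟩ := hrepA w₂ hw₂
    have hfe := hfin ωa ωb hpa hpb rfl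
    exact hAneMixed α ωa ωb (by rw [hXa]; exact hw₁α) (by rw [hXb]; exact hw₂α) hfe
  -- the two directions of the goal
  constructor
  · intro hxm hcon
    set α : Finset ((m : Fin M) → T m) := S.filter (fun z => z m = x m) with hαdef
    have hxα : x ∈ α := by
      rw [hαdef]
      simp only [Finset.mem_filter]
      exact ⟨hx, by trivial⟩
    have hx'α : x' ∉ α := by
      rw [hαdef]
      simp only [Finset.mem_filter]
      rintro ⟨-, h⟩
      exact hxm h.symm
    have hαS : α ⊆ S := by
      rw [hαdef]
      exact Finset.filter_subset _ _
    have hα : IsBinPart μ XX α := hBP α hαS ⟨x, hxα⟩ ⟨x', hx', hx'α⟩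
    have hmemα : ∀ ω, 0 < μ ω → (XX ω ∈ α ↔ X m ω = x m) := by
      intro ω hp
      rw [hαdef]
      simp only [Finset.mem_filter]
      exact ⟨fun h => h.2, fun h => ⟨hXmem ω hp, h⟩⟩
    have hAcyl : ∀ ω ω', 0 < μ ω → 0 < μ ω' → X m ω = X m ω' →
        bpVarOf μ XX α ω = bpVarOf μ XX α ω' := by
      intro ω ω' hp hp' h
      by_cases h1 : XX ω ∈ α
      · have h2 : XX ω' ∈ α := (hmemα ω' hp').2 (by rw [← h]; exact (hmemα ω hp).1 h1)
        rw [hAmem α ω h1, hAmem α ω' h2]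
      · have h2 : XX ω' ∉ α := fun hm =>
          h1 ((hmemα ω hp).2 (by rw [h]; exact (hmemα ω' hp').1 hm))
        exact hAnotEq α ω ω' h1 h2
    have hpairE : shEntropy ν (fun ω => (B α ω, Xstar m ω)) =
        shEntropy μ (fun ω => (bpVarOf μ XX α ω, X m ω)) := by
      refine transfer_entropy μ hμ0 ν hν0 X Xstar B {α} {m}
        (hB {α} (fun β hβ => by rw [Finset.mem_singleton] at hβ; rwa [hβ]) {m}) _ _ ?_ ?_
      · intro ω ω' _ _
        constructor
        · intro h
          refine ⟨fun β hβ => ?_, fun j hj => ?_⟩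
          · rw [Finset.mem_singleton] at hβ
            subst hβ
            exact congrArg Prod.fst h
          · rw [Finset.mem_singleton] at hj
            subst hj
            exact congrArg Prod.snd h
        · rintro ⟨h1, h2⟩
          exact congrArg₂ Prod.mk (h1 α (Finset.mem_singleton_self α))
            (h2 m (Finset.mem_singleton_self m))
      · intro ω ω' _ _
        constructor
        · intro h
          refine ⟨fun β hβ => ?_, fun j hj => ?_⟩
          · rw [Finset.mem_singleton] at hβ
            subst hβ
            exact congrArg Prod.fst h
          · rw [Finset.mem_singleton] at hj
            subst hj
            exact congrArg Prod.snd h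
        · rintro ⟨h1, h2⟩
          exact congrArg₂ Prod.mk (h1 α (Finset.mem_singleton_self α))
            (h2 m (Finset.mem_singleton_self m))
    have hApairE : shEntropy μ (fun ω => (bpVarOf μ XX α ω, X m ω)) =
        shEntropy μ (X m) :=
      shEntropy_congr μ hμ0 (fun ω ω' _ _ h => congrArg Prod.snd h)
        (fun ω ω' hp hp' h => congrArg₂ Prod.mk (hAcyl ω ω' hp hp' h) h)
    have hle : shEntropy ν (fun ω => (B α ω, Xstar m ω)) ≤ shEntropy ν (Xstar m) := by
      rw [hpairE, hApairE, ← HXm]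
    have hfin := finer_of_entropy_le ν hν0
      (fun ω ω' _ _ h => congrArg Prod.snd h :
        Finer ν (fun ω => (B α ω, Xstar m ω)) (Xstar m)) hle
    obtain ⟨ω₁, hq1, hXS1⟩ := hrepB x hx
    obtain ⟨ω₂, hq2, hXS2⟩ := hrepB x' hx'
    have hXsm : Xstar m ω₁ = Xstar m ω₂ := by
      have e1 : XS ω₁ m = σ x m := congrFun hXS1 m
      have e2 : XS ω₂ m = σ x' m := congrFun hXS2 m
      exact e1.trans (hcon.trans e2.symm)
    have hBeq := hfin ω₁ ω₂ hq1 hq2 hXsm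
    exact step2b α hα hαS x hx x' hx' hxα hx'α ω₁ ω₂ hq1 hq2 hXS1 hXS2
      (congrArg Prod.fst hBeq)
  · intro hdm hxm
    set αb : Finset ((m : Fin M) → T m) := S.filter (fun z => σ z m = σ x m) with hαbdef
    have hxαb : x ∈ αb := by
      rw [hαbdef]
      simp only [Finset.mem_filter]
      exact ⟨hx, by trivial⟩
    have hx'αb : x' ∉ αb := by
      rw [hαbdef]
      simp only [Finset.mem_filter]
      rintro ⟨-, h⟩
      exact hdm h.symm
    have hαbS : αb ⊆ S := by
      rw [hαbdef]
      exact Finset.filter_subset _ _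
    have hαb : IsBinPart μ XX αb := hBP αb hαbS ⟨x, hxαb⟩ ⟨x', hx', hx'αb⟩
    have hmem : ∀ z ∈ S, (z ∈ αb ↔ σ z m = σ x m) := by
      intro z hz
      rw [hαbdef]
      simp only [Finset.mem_filter]
      exact ⟨fun h => h.2, fun h => ⟨hz, h⟩⟩
    have hBfiner : Finer ν (Xstar m) (fun ω => (B αb ω, Xstar m ω)) := by
      intro ω ω' hq hq' h
      refine congrArg₂ Prod.mk ?_ h
      obtain ⟨w, hwS, hw⟩ := hσsurj (XS ω) (hXSmem ω hq)
      obtain ⟨w', hw'S, hw'⟩ := hσsurj (XS ω') (hXSmem ω' hq')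
      have hwm : σ w m = σ w' m := by
        have e1 : σ w m = XS ω m := congrFun hw m
        have e2 : σ w' m = XS ω' m := congrFun hw' m
        rw [e1, e2]
        exact h
      by_cases hwαb : w ∈ αb
      · have hw'αb : w' ∈ αb := (hmem w' hw'S).2 (by rw [← hwm]; exact (hmem w hwS).1 hwαb)
        exact step2a_in αb hαb hαbS w hwS w' hw'S hwαb hw'αb ω ω' hq hq' hw.symm hw'.symm
      · have hw'αb : w' ∉ αb := fun hm =>
          hwαb ((hmem w hwS).2 (by rw [hwm]; exact (hmem w' hw'S).1 hm))
        exact step2a_out αb hαb hαbS w hwS w' hw'S hwαb hw'αb ω ω' hq hq' hw.symm hw'.symm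
    have hpairE : shEntropy ν (fun ω => (B αb ω, Xstar m ω)) =
        shEntropy μ (fun ω => (bpVarOf μ XX αb ω, X m ω)) := by
      refine transfer_entropy μ hμ0 ν hν0 X Xstar B {αb} {m}
        (hB {αb} (fun β hβ => by rw [Finset.mem_singleton] at hβ; rwa [hβ]) {m}) _ _ ?_ ?_
      · intro ω ω' _ _
        constructor
        · intro h
          refine ⟨fun β hβ => ?_, fun j hj => ?_⟩
          · rw [Finset.mem_singleton] at hβ
            subst hβ
            exact congrArg Prod.fst h
          · rw [Finset.mem_singleton] at hj
            subst hj
            exact congrArg Prod.snd h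
        · rintro ⟨h1, h2⟩
          exact congrArg₂ Prod.mk (h1 αb (Finset.mem_singleton_self αb))
            (h2 m (Finset.mem_singleton_self m))
      · intro ω ω' _ _
        constructor
        · intro h
          refine ⟨fun β hβ => ?_, fun j hj => ?_⟩
          · rw [Finset.mem_singleton] at hβ
            subst hβ
            exact congrArg Prod.fst h
          · rw [Finset.mem_singleton] at hj
            subst hj
            exact congrArg Prod.snd h
        · rintro ⟨h1, h2⟩
          exact congrArg₂ Prod.mk (h1 αb (Finset.mem_singleton_self αb))
            (h2 m (Finset.mem_singleton_self m))
    have hBpairE : shEntropy ν (fun ω => (B αb ω, Xstar m ω)) = shEntropy ν (Xstar m) :=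
      shEntropy_congr ν hν0 (fun ω ω' _ _ h => congrArg Prod.snd h) hBfiner
    have hle : shEntropy μ (fun ω => (bpVarOf μ XX αb ω, X m ω)) ≤ shEntropy μ (X m) := by
      rw [← hpairE, hBpairE, HXm]
    have hfin := finer_of_entropy_le μ hμ0
      (fun ω ω' _ _ h => congrArg Prod.snd h :
        Finer μ (fun ω => (bpVarOf μ XX αb ω, X m ω)) (X m)) hle
    obtain ⟨ωa, hpa, hXa⟩ := hrepA x hx
    obtain ⟨ωb, hpb, hXb⟩ := hrepA x' hx'
    have hXmeq : X m ωa = X m ωb := by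
      have e1 : XX ωa m = x m := congrFun hXa m
      have e2 : XX ωb m = x' m := congrFun hXb m
      exact e1.trans (hxm.trans e2.symm)
    have hAeq := hfin ωa ωb hpa hpb hXmeq
    exact hAneMixed αb ωa ωb (by rw [hXa]; exact hxαb) (by rw [hXb]; exact hx'αb)
      (congrArg Prod.fst hAeq)
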